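/- A nonzero homogeneous polynomial $\Phi \in \mathbb{F}_q[\xi_0,\ldots,\xi_n]$ of degree at most $q$ cannot vanish at every point of $\mathbb{P}^n(\mathbb{F}_q)$; i.e., there exists $\mathbf{a} \in \mathbb{F}_q^{n+1} \setminus \{0\}$ with $\Phi(\mathbf{a}) \neq 0$. -/

import Mathlib

/-!
Multiplying `Φ` by `X₀ ^ (q - d)` gives a nonzero form of degree exactly `q`, which still vanishes
at every nonzero point and, having positive degree, also at the origin. A homogeneous polynomial
over a domain `R` of degree at most `#R` that vanishes on all of `R^σ` is zero
(`MvPolynomial.IsHomogeneous.eq_zero_of_forall_eval_eq_zero_of_le_card`), a contradiction.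
-/

open MvPolynomial

theorem MvPolynomial.IsHomogeneous.eval_zero_eq_zero {σ R : Type*} [CommSemiring R]
    {φ : MvPolynomial σ R} {n : ℕ} (hφ : φ.IsHomogeneous n) (hn : n ≠ 0) : eval 0 φ = 0 := by
  rw [MvPolynomial.eval_zero, constantCoeff_eq]
  exact hφ.coeff_eq_zero (by simpa using hn.symm)

/-- A nonzero homogeneous polynomial over `𝔽_q` of degree at most `q` cannot vanish at
every point of `ℙⁿ(𝔽_q)`: there is a nonzero `a ∈ 𝔽_q^{n+1}` with `Φ(a) ≠ 0`. -/
theorem exists_nonzero_point_of_homogeneous (q n d : ℕ) [Fact q.Prime]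
    (Φ : MvPolynomial (Fin (n + 1)) (ZMod q))
    (hΦ : Φ ≠ 0) (hhom : Φ.IsHomogeneous d) (hdeg : d ≤ q) :
    ∃ a : Fin (n + 1) → ZMod q, a ≠ 0 ∧ MvPolynomial.eval a Φ ≠ 0 := by
  by_contra! hvanish
  set Ψ := X 0 ^ (q - d) * Φ
  have hΨ : Ψ.IsHomogeneous q := by
    simpa [Nat.sub_add_cancel hdeg] using (isHomogeneous_X_pow 0 (q - d)).mul hhom
  refine mul_ne_zero (pow_ne_zero _ (X_ne_zero 0)) hΦ
    (hΨ.eq_zero_of_forall_eval_eq_zero_of_le_card (fun a => ?_) (by simp))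
  rcases eq_or_ne a 0 with rfl | ha
  · exact hΨ.eval_zero_eq_zero (Fact.out : q.Prime).ne_zero
  · simp [Ψ, hvanish a ha]
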